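/- If O is a USO of the k-cube and h ∈ [k], then the orientation O' obtained by reversing all h-edges (O'(v)_h := 1 − O(v)_h and O'(v)_i := O(v)_i for i ≠ h) is again a USO. -/
import Mathlib

/-- The Szabó–Welzl condition: `O` is a unique sink orientation of the `k`-cube. -/
def IsUSO {k : ℕ} (O : (Fin k → Bool) → (Fin k → Bool)) : Prop :=
  ∀ v w : Fin k → Bool, v ≠ w → ∃ i : Fin k, v i ≠ w i ∧ O v i = O w i

/-- Reversing all `h`-edges of a USO yields a USO. -/
theorem stmt14 (k : ℕ) (O : (Fin k → Bool) → (Fin k → Bool)) (hO : IsUSO O)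
    (h : Fin k) :
    IsUSO (fun v => Function.update (O v) h (!(O v h))) := by
  intro v w hvw
  obtain ⟨i, hi, hOi⟩ := hO v w hvw
  refine ⟨i, hi, ?_⟩
  by_cases hih : i = h
  · subst hih; simp [Function.update_self, hOi]
  · simp [Function.update_of_ne hih, hOi]
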